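/- Let [a,b] ⊂ ℝ be a compact interval disjoint from the effective domain D(β̂), i.e. β̂(r) = +∞ for every r ∈ [a,b]. Then the Moreau–Yosida regularizations β̂_ε diverge to +∞ uniformly on [a,b] as ε tends to 0: for every M > 0 there exists ε₀ > 0 such that β̂_ε(r) ≥ M for every ε ∈ (0,ε₀) and every r ∈ [a,b]. -/
import Mathlib


open Filter Set ENNReal

/-- The Moreau–Yosida regularization `β̂_ε(r) = inf_s ((r−s)²/(2ε) + β̂(s))`
of a `[0,+∞]`-valued function `β̂`, as a real-valued function. -/
noncomputable def moreau (βh : ℝ → ℝ≥0∞) (ε : ℝ) (r : ℝ) : ℝ :=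
  (⨅ s : ℝ, ENNReal.ofReal ((r - s) ^ 2 / (2 * ε)) + βh s).toReal

/-- If the compact interval `[a,b]` is disjoint from the effective domain of the convex,
proper, l.s.c. function `β̂ : ℝ → [0,+∞]` (with `β̂(0) = 0` and `β̂(r) → +∞` as
`|r| → +∞`), i.e. `β̂ = +∞` on `[a,b]`, then the Moreau–Yosida regularizations `β̂_ε`
diverge to `+∞` uniformly on `[a,b]` as `ε → 0`. -/
theorem stmt11 (βh : ℝ → ℝ≥0∞)
    (hconv : ∀ x y : ℝ, ∀ c d : ℝ, 0 ≤ c → 0 ≤ d → c + d = 1 →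
      βh (c * x + d * y) ≤ ENNReal.ofReal c * βh x + ENNReal.ofReal d * βh y)
    (hproper : ∃ r : ℝ, βh r ≠ ⊤)
    (hlsc : LowerSemicontinuous βh)
    (hzero : βh 0 = 0)
    (hcoercive : Filter.Tendsto βh (Filter.cocompact ℝ) Filter.atTop)
    (a b : ℝ) (hab : a ≤ b)
    (hdisj : ∀ r ∈ Set.Icc a b, βh r = ⊤) :
    ∀ M > (0 : ℝ), ∃ ε₀ > (0 : ℝ), ∀ ε ∈ Set.Ioo (0 : ℝ) ε₀, ∀ r ∈ Set.Icc a b,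
      M ≤ moreau βh ε r := by
  intro M hM
  set K : Set ℝ := {s | βh s ≤ ENNReal.ofReal M} with hKdef
  have hKclosed : IsClosed K := by
    have := hlsc.isClosed_preimage (ENNReal.ofReal M)
    simpa [Set.preimage, Set.Iic] using this
  -- δ : uniform distance between [a,b] and K
  obtain ⟨δ, hδpos, hδ⟩ : ∃ δ > (0 : ℝ), ∀ r ∈ Set.Icc a b, ∀ s ∈ K, δ ≤ |r - s| := by
    rcases K.eq_empty_or_nonempty with hKe | hKne
    · exact ⟨1, one_pos, by simp [hKe]⟩
    · have hcont : ContinuousOn (fun r => Metric.infDist r K) (Set.Icc a b) :=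
        (Metric.continuous_infDist_pt K).continuousOn
      obtain ⟨r₀, hr₀, hmin⟩ :=
        (isCompact_Icc (a := a) (b := b)).exists_isMinOn
          ⟨a, Set.left_mem_Icc.2 hab⟩ hcont
      have hr₀notK : r₀ ∉ K := by
        intro h
        have h' : βh r₀ ≤ ENNReal.ofReal M := h
        rw [hdisj r₀ hr₀] at h'
        exact ENNReal.ofReal_ne_top (top_le_iff.1 h')
      have hpos : 0 < Metric.infDist r₀ K :=
        (hKclosed.notMem_iff_infDist_pos hKne).1 hr₀notK
      refine ⟨Metric.infDist r₀ K, hpos, fun r hr s hs => ?_⟩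
      have h1 : Metric.infDist r₀ K ≤ Metric.infDist r K := hmin hr
      have h2 : Metric.infDist r K ≤ dist r s := Metric.infDist_le_dist_of_mem hs
      calc Metric.infDist r₀ K ≤ dist r s := h1.trans h2
        _ = |r - s| := Real.dist_eq r s
  refine ⟨δ ^ 2 / (2 * (M + 1)), by positivity, fun ε hε r hr => ?_⟩
  obtain ⟨hε0, hεlt⟩ := hε
  -- the infimum is finite
  obtain ⟨r₁, hr₁⟩ := hproper
  have hne : (⨅ s : ℝ, ENNReal.ofReal ((r - s) ^ 2 / (2 * ε)) + βh s) ≠ ⊤ := by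
    intro h
    have hle : (⨅ s : ℝ, ENNReal.ofReal ((r - s) ^ 2 / (2 * ε)) + βh s)
        ≤ ENNReal.ofReal ((r - r₁) ^ 2 / (2 * ε)) + βh r₁ := iInf_le _ r₁
    rw [h, top_le_iff] at hle
    exact (ENNReal.add_ne_top.2 ⟨ENNReal.ofReal_ne_top, hr₁⟩) hle
  -- the infimum is at least ofReal M
  have hge : ENNReal.ofReal M ≤ ⨅ s : ℝ, ENNReal.ofReal ((r - s) ^ 2 / (2 * ε)) + βh s := by
    refine le_iInf fun s => ?_
    by_cases hs : s ∈ K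
    · have h1 : δ ≤ |r - s| := hδ r hr s hs
      have h2 : δ ^ 2 ≤ (r - s) ^ 2 := by
        rw [← sq_abs (r - s)]
        exact pow_le_pow_left₀ hδpos.le h1 2
      have h3 : M ≤ (r - s) ^ 2 / (2 * ε) := by
        rw [le_div_iff₀ (by positivity)]
        have hlt : ε * (2 * (M + 1)) < δ ^ 2 :=
          (lt_div_iff₀ (by positivity)).1 hεlt
        nlinarith
      calc ENNReal.ofReal M ≤ ENNReal.ofReal ((r - s) ^ 2 / (2 * ε)) :=
            ENNReal.ofReal_le_ofReal h3
        _ ≤ _ := le_add_right le_rfl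
    · have : ENNReal.ofReal M < βh s := lt_of_not_ge hs
      exact le_trans this.le (le_add_self)
  have := ENNReal.toReal_mono hne hge
  rwa [ENNReal.toReal_ofReal hM.le] at this
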